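/- Let f : {a}* → {a,b}* be the function defined by f(a^{2n}) = (ab)ⁿ and f(a^{2n+1}) = (ab)ⁿ·a·(ab)ⁿ. Then f is Reg-continuous: for every regular language L ⊆ {a,b}*, the preimage f⁻¹(L) is regular. -/

import Mathlib

/-!
Let `M` be a DFA for `L` with transition map `g : σ → σ` for the word `ab`. Then `M` sends
`fMid(aⁿ)` to `g^[k] q₀` if `n = 2k`, and to `g^[k] (δ(g^[k] q₀, a))` if `n = 2k + 1`. Reading
`aⁿ` letter by letter, a finite automaton can keep track of the function `g^[⌊n/2⌋] : σ → σ`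
together with the parity of `n`, and that is enough to decide acceptance.
-/

/-- The two-letter alphabet `{a, b}`. -/
inductive AB : Type
  | a : AB
  | b : AB
deriving DecidableEq

/-- `wpow x k` is the `k`-fold concatenation `xᵏ` of the word `x`. -/
def wpow {A : Type*} (x : List A) : ℕ → List A
  | 0 => []
  | n + 1 => x ++ wpow x n

/-- The function `f(a^{2n}) = (ab)ⁿ` and `f(a^{2n+1}) = (ab)ⁿ·a·(ab)ⁿ`. -/
def fMid (w : List Unit) : List AB :=
  if w.length % 2 = 0 then wpow [AB.a, AB.b] (w.length / 2)
  else wpow [AB.a, AB.b] (w.length / 2) ++ [AB.a] ++ wpow [AB.a, AB.b] (w.length / 2)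

theorem Function.comp_left_iterate {α β : Type*} (g : α → α) (u : β → α) (k : ℕ) :
    (g ∘ ·)^[k] u = g^[k] ∘ u := by
  induction k with
  | zero => rfl
  | succ k ih => rw [Function.iterate_succ_apply', ih, Function.iterate_succ']; rfl

theorem Language.isRegular_setOf_iterate_length_mem {α S : Type*} [Finite S]
    (h : S → S) (s : S) (A : Set S) :
    Language.IsRegular {w : List α | h^[w.length] s ∈ A} := by
  have := Fintype.ofFinite S
  let N : DFA α S := ⟨fun q _ => h q, s, A⟩
  have evalFrom_eq : ∀ (w : List α) (q : S), N.evalFrom q w = h^[w.length] q := by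
    intro w
    induction w with
    | nil => intro q; rfl
    | cons x w ih => intro q; rw [DFA.evalFrom_cons, ih, List.length_cons,
        Function.iterate_succ_apply]
  exact Language.isRegular_iff.mpr
    ⟨S, inferInstance, N, Set.ext fun w => Iff.of_eq (congrArg (· ∈ A) (evalFrom_eq w s))⟩

def halfStep {β : Type*} (e : β → β) : β × Bool → β × Bool
  | (x, false) => (x, true)
  | (x, true) => (e x, false)

theorem halfStep_iterate_two_mul {β : Type*} (e : β → β) (k : ℕ) (x : β) :
    (halfStep e)^[2 * k] (x, false) = (e^[k] x, false) := by
  induction k generalizing x with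
  | zero => rfl
  | succ k ih =>
    rw [Nat.mul_succ, Function.iterate_add_apply, Function.iterate_succ_apply]
    exact ih (e x)

theorem halfStep_iterate_two_mul_add_one {β : Type*} (e : β → β) (k : ℕ) (x : β) :
    (halfStep e)^[2 * k + 1] (x, false) = (e^[k] x, true) := by
  rw [Function.iterate_succ_apply', halfStep_iterate_two_mul]; rfl

theorem DFA.evalFrom_wpow {α σ : Type*} (M : DFA α σ) (s : σ) (x : List α) (k : ℕ) :
    M.evalFrom s (wpow x k) = (M.evalFrom · x)^[k] s := by
  induction k generalizing s with
  | zero => rfl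
  | succ k ih => rw [wpow, DFA.evalFrom_of_append, ih, Function.iterate_succ_apply]

section fMid

variable {w : List Unit} {k : ℕ} {σ : Type*} (M : DFA AB σ)

theorem DFA.eval_fMid_of_length_eq_two_mul (hw : w.length = 2 * k) :
    M.eval (fMid w) = (M.evalFrom · [AB.a, AB.b])^[k] M.start := by
  have hk : w.length / 2 = k := by omega
  rw [fMid, if_pos (by omega), hk, DFA.eval, DFA.evalFrom_wpow]

theorem DFA.eval_fMid_of_length_eq_two_mul_add_one (hw : w.length = 2 * k + 1) :
    M.eval (fMid w) = (M.evalFrom · [AB.a, AB.b])^[k]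
      (M.step ((M.evalFrom · [AB.a, AB.b])^[k] M.start) AB.a) := by
  have hk : w.length / 2 = k := by omega
  rw [fMid, if_neg (by omega), hk, DFA.eval, DFA.evalFrom_of_append, DFA.evalFrom_of_append,
    DFA.evalFrom_wpow, DFA.evalFrom_wpow, DFA.evalFrom_singleton]

end fMid

/-- `fMid` is Reg-continuous: the preimage of every regular language is
regular. -/
theorem fMid_reg_continuous (L : Language AB) (hL : L.IsRegular) :
    Language.IsRegular {w : List Unit | fMid w ∈ L} := by
  obtain ⟨σ, _, M, rfl⟩ := hL
  let g : σ → σ := (M.evalFrom · [AB.a, AB.b])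
  let A : Set ((σ → σ) × Bool) :=
    {p | (bif p.2 then p.1 (M.step (p.1 M.start) AB.a) else p.1 M.start) ∈ M.accept}
  have preimage_eq : {w : List Unit | fMid w ∈ M.accepts} =
      {w | (halfStep (g ∘ ·))^[w.length] (id, false) ∈ A} := by
    ext w
    obtain ⟨k, hk | hk⟩ := Nat.even_or_odd' w.length
    · simp [DFA.mem_accepts, M.eval_fMid_of_length_eq_two_mul hk, hk,
        halfStep_iterate_two_mul, Function.comp_left_iterate, A, g]
    · simp [DFA.mem_accepts, M.eval_fMid_of_length_eq_two_mul_add_one hk, hk,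
        halfStep_iterate_two_mul_add_one, Function.comp_left_iterate, A, g]
  rw [preimage_eq]
  exact Language.isRegular_setOf_iterate_length_mem _ _ _
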